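/- arXiv:2308.03173 — 4 statements merged into one kernel-verified Lean document; each statement's English description precedes it below -/
import Mathlib

section
/- Let a, b be coprime positive integers. For d ≥ 0, the number of pairs (x, y) of nonnegative integers with a*x + b*y = d is either ⌊d/(a*b)⌋ or ⌊d/(a*b)⌋ + 1. -/
theorem stmt_11 (a b : ℕ) (ha : 0 < a) (hb : 0 < b) (h : Nat.gcd a b = 1)
    (d : ℕ) :
    Set.ncard {p : ℕ × ℕ | a * p.1 + b * p.2 = d} = d / (a * b) ∨
      Set.ncard {p : ℕ × ℕ | a * p.1 + b * p.2 = d} = d / (a * b) + 1 := by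
  haveI : NeZero b := ⟨hb.ne'⟩
  set k := a * b with hk
  have hkpos : 0 < k := Nat.mul_pos ha hb
  set x0 : ℕ := ((a : ZMod b)⁻¹ * (d : ZMod b)).val with hx0def
  have hx0lt : x0 < b := ZMod.val_lt _
  have hcop : Nat.Coprime a b := h
  have hmod : a * x0 ≡ d [MOD b] := by
    have h1 : ((a * x0 : ℕ) : ZMod b) = (d : ZMod b) := by
      push_cast
      rw [hx0def, ZMod.natCast_val, ZMod.cast_id, ← mul_assoc,
        ZMod.coe_mul_inv_eq_one a hcop, one_mul]
    exact (ZMod.natCast_eq_natCast_iff _ _ _).mp h1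
  have hxmod : ∀ x y : ℕ, a * x + b * y = d → x % b = x0 := by
    intro x y hxy
    have h1 : a * x ≡ d [MOD b] := by
      show a * x % b = d % b
      rw [← hxy, Nat.add_mul_mod_self_left]
    have h2 : x ≡ x0 [MOD b] :=
      Nat.ModEq.cancel_left_of_coprime hcop.symm (h1.trans hmod.symm)
    have h3 : x % b = x0 % b := h2
    rwa [Nat.mod_eq_of_lt hx0lt] at h3
  by_cases hle : a * x0 ≤ d
  · -- solution exists
    have hbd : b ∣ d - a * x0 := (Nat.modEq_iff_dvd' hle).mp hmod
    obtain ⟨y0, hy0⟩ := hbd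
    have hd : d = a * x0 + b * y0 := by omega
    set N := (d - a * x0) / k with hN
    have hginj : Function.Injective (fun t : ℕ => (x0 + b * t, y0 - a * t)) := by
      intro t1 t2 he
      have h1 : x0 + b * t1 = x0 + b * t2 := congrArg Prod.fst he
      exact Nat.eq_of_mul_eq_mul_left hb (Nat.add_left_cancel h1)
    have hset : {p : ℕ × ℕ | a * p.1 + b * p.2 = d} =
        ↑((Finset.range (N + 1)).image (fun t => (x0 + b * t, y0 - a * t))) := by
      ext ⟨x, y⟩
      simp only [Set.mem_setOf_eq, Finset.coe_image, Set.mem_image, Finset.mem_coe,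
        Finset.mem_range]
      constructor
      · intro hp
        have h3 : x % b = x0 := hxmod x y hp
        set t := x / b with htdef
        have hx : b * t + x0 = x := by rw [← h3, htdef]; exact Nat.div_add_mod x b
        have h5 : a * x = k * t + a * x0 := by rw [← hx, hk]; ring
        have h6 : a * x ≤ d := Nat.le.intro hp
        have h7 : k * t ≤ d - a * x0 := Nat.le_sub_of_add_le (by rw [← h5]; exact h6)
        refine ⟨t, Nat.lt_succ_of_le ((Nat.le_div_iff_mul_le hkpos).mpr
          (by rwa [mul_comm] at h7)), ?_⟩
        have h8 : b * (y + a * t) = b * y0 := by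
          have h9 : k * t = b * (a * t) := by rw [hk]; ring
          have h10 : (k * t + a * x0) + b * y = a * x0 + b * y0 := by
            rw [← h5, hp, hd]
          calc b * (y + a * t) = b * y + b * (a * t) := by ring
            _ = b * y0 := by rw [← h9]; omega
        have h11 : y + a * t = y0 := Nat.eq_of_mul_eq_mul_left hb h8
        simp only [Prod.mk.injEq]
        exact ⟨by omega, by omega⟩
      · rintro ⟨t, htlt, heq⟩
        cases heq
        show a * (x0 + b * t) + b * (y0 - a * t) = d
        have h7 : k * t ≤ b * y0 := by
          rw [← hy0]
          have := (Nat.le_div_iff_mul_le hkpos).mp (Nat.lt_succ_iff.mp htlt)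
          rwa [mul_comm] at this
        have h8 : a * t ≤ y0 := by
          apply Nat.le_of_mul_le_mul_left _ hb
          calc b * (a * t) = k * t := by rw [hk]; ring
            _ ≤ b * y0 := h7
        rw [hd]
        zify [h8]
        ring
    rw [hset, Set.ncard_coe_finset, Finset.card_image_of_injective _ hginj,
      Finset.card_range]
    -- final arithmetic: N + 1 = d / k or d / k + 1
    obtain ⟨q, s, hqs, hs⟩ : ∃ q s, d = k * q + s ∧ s < k :=
      ⟨d / k, d % k, (Nat.div_add_mod d k).symm, Nat.mod_lt d hkpos⟩
    have hq : d / k = q := by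
      rw [hqs, Nat.mul_add_div hkpos, Nat.div_eq_of_lt hs, add_zero]
    have hr : a * x0 < k := by
      rw [hk]; exact (Nat.mul_lt_mul_left ha).mpr hx0lt
    by_cases hrs : a * x0 ≤ s
    · right
      have h1 : d - a * x0 = k * q + (s - a * x0) := by
        rw [hqs]; exact Nat.add_sub_assoc hrs _
      rw [hq, hN, h1, Nat.mul_add_div hkpos, Nat.div_eq_of_lt (by omega), add_zero]
    · left
      -- q ≥ 1
      have hq1 : 1 ≤ q := by
        rcases Nat.eq_zero_or_pos q with h0 | h0
        · exfalso; rw [h0, Nat.mul_zero, zero_add] at hqs; omega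
        · exact h0
      obtain ⟨q', rfl⟩ : ∃ q', q = q' + 1 := ⟨q - 1, by omega⟩
      have hqs' : d = k * q' + (k + s) := by rw [hqs]; ring
      have h1 : d - a * x0 = k * q' + (k + s - a * x0) := by
        rw [hqs']; exact Nat.add_sub_assoc (by omega) _
      rw [hq, hN, h1, Nat.mul_add_div hkpos, Nat.div_eq_of_lt (by omega), add_zero]
  · -- no solution
    have hempty : {p : ℕ × ℕ | a * p.1 + b * p.2 = d} = ∅ := by
      ext ⟨x, y⟩
      simp only [Set.mem_setOf_eq, Set.mem_empty_iff_false, iff_false]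
      intro hp
      have h3 : x % b = x0 := hxmod x y hp
      have h4 : x0 ≤ x := h3 ▸ Nat.mod_le x b
      have h5 : a * x0 ≤ a * x := Nat.mul_le_mul_left a h4
      have h6 : a * x ≤ d := Nat.le.intro hp
      omega
    rw [hempty, Set.ncard_empty]
    left
    have hdk : d < k := by
      have : a * x0 < k := by
        rw [hk]; exact (Nat.mul_lt_mul_left ha).mpr hx0lt
      omega
    rw [Nat.div_eq_of_lt hdk]
end

section
/- Let a, b be coprime positive integers. The number of nonnegative integers that are not representable as a*x + b*y with x, y nonnegative integers equals (a-1)*(b-1)/2. -/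
/-!
Every `d ≥ (a - 1) * (b - 1)` is representable, and on `[0, (a - 1) * (b - 1))` the reflection
`d ↦ (a - 1) * (b - 1) - 1 - d = a * b - a - b - d` exchanges representable and non-representable
numbers, so exactly half of that interval is non-representable.
-/

open Finset

namespace Nat.Coprime

variable {a b : ℕ}

theorem exists_mul_add_mul_eq_of_le (hab : Coprime a b) {d : ℕ} (hd : (a - 1) * (b - 1) ≤ d) :
    ∃ x y : ℕ, a * x + b * y = d := by
  obtain ⟨x, y, hxy⟩ := exists_add_mul_eq_of_gcd_dvd_of_mul_pred_le a b d
    (by simp [hab.gcd_eq_one]) (by simpa only [pred_eq_sub_one] using hd)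
  exact ⟨x, y, by rw [mul_comm a, mul_comm b, hxy]⟩

/-- Two representations of `d` and `e` would add up to a representation of `a * b` with both
coefficients positive. -/
theorem not_exists_mul_add_mul_eq_of_exists (hab : Coprime a b) {d e : ℕ}
    (hde : d + e + a + b = a * b) (hd : ∃ x y : ℕ, a * x + b * y = d) :
    ¬ ∃ x y : ℕ, a * x + b * y = e := by
  obtain ⟨x, y, rfl⟩ := hd
  rintro ⟨x', y', rfl⟩
  exact hab.mul_add_mul_ne_mul (a := x + x' + 1) (b := y + y' + 1) (by omega) (by omega)
    (by linarith)

/-- Represent `d + a * b`; if neither coefficient can absorb the extra `a * b`, then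
`x < b` and `y < a`, and `e = a * (b - 1 - x) + b * (a - 1 - y)`. -/
theorem exists_mul_add_mul_eq_of_not_exists (hab : Coprime a b) {d e : ℕ}
    (hde : d + e + a + b = a * b) (he : ¬ ∃ x y : ℕ, a * x + b * y = e) :
    ∃ x y : ℕ, a * x + b * y = d := by
  obtain ⟨x, y, hxy⟩ := hab.exists_mul_add_mul_eq_of_le (d := d + a * b)
    ((Nat.mul_le_mul (sub_le a 1) (sub_le b 1)).trans (le_add_left _ _))
  by_cases hx : b ≤ x
  · obtain ⟨x', rfl⟩ := exists_add_of_le hx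
    exact ⟨x', y, by linarith⟩
  by_cases hy : a ≤ y
  · obtain ⟨y', rfl⟩ := exists_add_of_le hy
    exact ⟨x, y', by linarith⟩
  obtain ⟨s, rfl⟩ : ∃ s, b = x + 1 + s := ⟨b - (x + 1), by omega⟩
  obtain ⟨t, rfl⟩ : ∃ t, a = y + 1 + t := ⟨a - (y + 1), by omega⟩
  exact absurd ⟨s, t, by linarith⟩ he

end Nat.Coprime

theorem Set.ncard_compl_eq_div_two {S : Set ℕ} {n : ℕ} (h_ge : ∀ d, n ≤ d → d ∈ S)
    (h_refl : ∀ d e, d + e + 1 = n → (d ∈ S ↔ e ∉ S)) : Sᶜ.ncard = n / 2 := by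
  classical
  have hcompl : Sᶜ = ↑((Finset.range n).filter (· ∉ S)) := by
    ext d
    simp only [mem_compl_iff, coe_filter, Finset.mem_range, mem_ofPred_eq, iff_and_self]
    exact fun hd => lt_of_not_ge (mt (h_ge d) hd)
  have hswap :
      ((Finset.range n).filter (· ∈ S)).card = ((Finset.range n).filter (· ∉ S)).card := by
    refine card_nbij' (fun d => n - 1 - d) (fun d => n - 1 - d) ?_ ?_ ?_ ?_ <;>
      intro d hd <;> simp only [coe_filter, Finset.mem_range, mem_ofPred_eq] at hd ⊢
    · exact ⟨by omega, (h_refl d _ (by omega)).1 hd.2⟩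
    · exact ⟨by omega, (h_refl _ d (by omega)).2 hd.2⟩
    · omega
    · omega
  have hsum := card_filter_add_card_filter_not (s := Finset.range n) (· ∈ S)
  rw [card_range] at hsum
  rw [hcompl, ncard_coe_finset]
  omega

theorem stmt_13_general (a b : ℕ) (h : Nat.gcd a b = 1) :
    Set.ncard {d : ℕ | ¬ ∃ x y : ℕ, a * x + b * y = d} = (a - 1) * (b - 1) / 2 := by
  have hab : Nat.Coprime a b := h
  refine Set.ncard_compl_eq_div_two (S := {d | ∃ x y : ℕ, a * x + b * y = d})
    (fun d => hab.exists_mul_add_mul_eq_of_le) fun d e hde => ?_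
  have hde' : d + e + a + b = a * b := by
    obtain _ | a := a
    · simp at hde
    obtain _ | b := b
    · simp at hde
    simp only [add_tsub_cancel_right] at hde
    linarith
  exact ⟨hab.not_exists_mul_add_mul_eq_of_exists hde',
    hab.exists_mul_add_mul_eq_of_not_exists hde'⟩

theorem stmt_13 (a b : ℕ) (ha : 0 < a) (hb : 0 < b) (h : Nat.gcd a b = 1) :
    Set.ncard {d : ℕ | ¬ ∃ x y : ℕ, a * x + b * y = d} = (a - 1) * (b - 1) / 2 :=
  stmt_13_general a b h
end

section
/- Let a, b be coprime positive integers. For every integer d with a*b - a - b < d < a*b, there exists a pair (x, y) of nonnegative integers with a*x + b*y = d, and this pair is unique. -/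
theorem stmt_15 (a b : ℤ) (ha : 2 ≤ a) (hb : 2 ≤ b) (h : IsCoprime a b)
    (d : ℤ) (hd1 : a * b - a - b < d) (hd2 : d < a * b) :
    ∃! p : ℤ × ℤ, 0 ≤ p.1 ∧ 0 ≤ p.2 ∧ a * p.1 + b * p.2 = d := by
  obtain ⟨u, v, huv⟩ := h
  have hb0 : (0:ℤ) < b := by linarith
  have ha0 : (0:ℤ) < a := by linarith
  set x := (u * d) % b with hxdef
  have hx0 : 0 ≤ x := Int.emod_nonneg _ (by linarith)
  have hxb : x < b := Int.emod_lt_of_pos _ hb0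
  have hmod : x + b * ((u * d) / b) = u * d := Int.emod_add_mul_ediv (u * d) b
  have hdvd : b ∣ (d - a * x) := by
    refine ⟨a * ((u * d) / b) + v * d, ?_⟩
    have hd : u * a * d + v * b * d = d := by linear_combination d * huv
    nlinarith [hmod, hd]
  obtain ⟨y, hy⟩ := hdvd
  have hxy : a * x + b * y = d := by linarith
  have hy0 : 0 ≤ y := by
    by_contra hneg
    push_neg at hneg
    have : y ≤ -1 := by omega
    nlinarith [mul_le_mul_of_nonneg_left (show x ≤ b - 1 by omega) (le_of_lt ha0)]
  refine ⟨(x, y), ⟨hx0, hy0, hxy⟩, ?_⟩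
  rintro ⟨x', y'⟩ ⟨hx'0, hy'0, heq⟩
  simp only at *
  have hx'b : x' < b := by nlinarith
  have hbdvd : b ∣ a * (x' - x) := by
    refine ⟨y - y', ?_⟩; ring_nf; nlinarith [heq, hxy]
  have hcop : IsCoprime b a := ⟨v, u, by linarith⟩
  have hbx : b ∣ (x' - x) := hcop.dvd_of_dvd_mul_left hbdvd
  obtain ⟨k, hk⟩ := hbx
  have hk1 : k < 1 := by nlinarith
  have hk2 : -1 < k := by nlinarith
  have hk0 : k = 0 := by omega
  have hxx : x' = x := by rw [hk0, mul_zero] at hk; omega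
  have hyy : y' = y := by nlinarith
  simp [hxx, hyy]
end

section
/- Let a, b be coprime positive integers. A nonnegative integer d is not representable as a*x + b*y with x, y nonnegative integers if and only if d = a*b - a*s - b*t for some integers s, t with s ≥ 1 and t ≥ 1 (equivalently, the unique integers x₀ with 0 ≤ x₀ < b and a*x₀ ≡ d (mod b) satisfies a*x₀ > d). -/
theorem stmt_18 (a b : ℕ) (ha : 2 ≤ a) (hb : 2 ≤ b) (h : Nat.gcd a b = 1)
    (d : ℕ) (hd : d ≤ a * b - a - b) :
    (¬ ∃ x y : ℕ, a * x + b * y = d) ↔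
      ∃ s t : ℤ, 1 ≤ s ∧ 1 ≤ t ∧ (d : ℤ) = a * b - a * s - b * t := by
  have hco : IsCoprime (a : ℤ) (b : ℤ) := by
    rw [Int.isCoprime_iff_gcd_eq_one]
    exact_mod_cast h
  have hb0 : (0 : ℤ) < (b : ℤ) := by exact_mod_cast Nat.lt_of_lt_of_le two_pos hb
  constructor
  · intro hrep
    obtain ⟨u, v, huv⟩ := hco
    set x₀ : ℤ := (d * u) % b with hx0def
    set q : ℤ := (d * u) / b with hqdef
    have hres : x₀ + b * q = d * u := Int.emod_add_mul_ediv (d * u) b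
    have hx0 : 0 ≤ x₀ := Int.emod_nonneg _ (ne_of_gt hb0)
    have hx0' : x₀ < b := Int.emod_lt_of_pos _ hb0
    set y₀ : ℤ := a * q + d * v with hy0def
    have key : (a : ℤ) * x₀ + b * y₀ = d := by
      have : (a : ℤ) * x₀ + b * y₀ = d * (u * a + v * b) + a * (x₀ + b * q - d * u) := by
        ring
      rw [this, huv, hres] ; ring
    have hy0 : y₀ < 0 := by
      by_contra hy
      push_neg at hy
      apply hrep
      refine ⟨x₀.toNat, y₀.toNat, ?_⟩
      have : (a : ℤ) * x₀.toNat + b * y₀.toNat = d := by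
        rw [Int.toNat_of_nonneg hx0, Int.toNat_of_nonneg hy] ; exact key
      exact_mod_cast this
    refine ⟨b - x₀, -y₀, by omega, by omega, ?_⟩
    linarith [key]
  · rintro ⟨s, t, hs, ht, heq⟩ ⟨x, y, hxy⟩
    have hxy' : (a : ℤ) * x + b * y = d := by exact_mod_cast hxy
    have hkey : (a : ℤ) * (x + s) + b * (y + t) = a * b := by linarith
    have hbd : (b : ℤ) ∣ (x + s) := by
      have hdv : (b : ℤ) ∣ (a : ℤ) * (x + s) :=
        ⟨a - (y + t), by linarith⟩
      exact (hco.symm).dvd_of_dvd_mul_left hdv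
    have had : (a : ℤ) ∣ (y + t) := by
      have hdv : (a : ℤ) ∣ (b : ℤ) * (y + t) :=
        ⟨b - (x + s), by linarith⟩
      exact hco.dvd_of_dvd_mul_left hdv
    have hx1 : (1 : ℤ) ≤ x + s := by have := Int.natCast_nonneg x; linarith
    have hy1 : (1 : ℤ) ≤ y + t := by have := Int.natCast_nonneg y; linarith
    have h1 : (b : ℤ) ≤ x + s := Int.le_of_dvd (by linarith) hbd
    have h2 : (a : ℤ) ≤ y + t := Int.le_of_dvd (by linarith) had
    have ha0 : (0 : ℤ) < a := by exact_mod_cast Nat.lt_of_lt_of_le two_pos ha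
    nlinarith [mul_pos ha0 hb0]
end
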